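/- arXiv:1704.06641 — 4 statements merged into one kernel-verified Lean document; each statement's English description precedes it below -/
import Mathlib

section
/- For every positive integer n, the factorial satisfies √(2π) · n^(n+1/2) · e^(−n) ≤ n! ≤ e · n^(n+1/2) · e^(−n). -/
open Real

lemma sqrt_pi_le_stirlingSeq (n : ℕ) (hn : 0 < n) : Real.sqrt π ≤ Stirling.stirlingSeq n := by
  obtain ⟨m, rfl⟩ := Nat.exists_eq_add_of_lt hn
  rw [zero_add]
  have h : Filter.Tendsto (Stirling.stirlingSeq ∘ Nat.succ) Filter.atTop (nhds (Real.sqrt π)) :=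
    Stirling.tendsto_stirlingSeq_sqrt_pi.comp (Filter.tendsto_add_atTop_nat 1) |>.congr (by simp [Nat.succ_eq_add_one])
  exact Stirling.stirlingSeq'_antitone.le_of_tendsto h m

lemma stirlingSeq_le_one (n : ℕ) (hn : 0 < n) :
    Stirling.stirlingSeq n ≤ Real.exp 1 / Real.sqrt 2 := by
  obtain ⟨m, rfl⟩ := Nat.exists_eq_add_of_lt hn
  rw [zero_add]
  have := Stirling.stirlingSeq'_antitone (Nat.zero_le m)
  simpa [Stirling.stirlingSeq_one] using this

/-- Uniform (non-asymptotic) Stirling approximation: for every positive integer `n`,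
`√(2π) · n^(n+1/2) · e^(−n) ≤ n! ≤ e · n^(n+1/2) · e^(−n)`. -/
theorem stmt_0 (n : ℕ) (hn : 0 < n) :
    Real.sqrt (2 * Real.pi) * (n : ℝ) ^ ((n : ℝ) + 1 / 2) * Real.exp (-(n : ℝ))
      ≤ (n.factorial : ℝ) ∧
    (n.factorial : ℝ)
      ≤ Real.exp 1 * (n : ℝ) ^ ((n : ℝ) + 1 / 2) * Real.exp (-(n : ℝ)) := by
  have hnpos : (0 : ℝ) < n := Nat.cast_pos.mpr hn
  have hd : (0 : ℝ) < Real.sqrt (2 * n) * ((n : ℝ) / Real.exp 1) ^ n := by positivity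
  have hfact : (n.factorial : ℝ) =
      Stirling.stirlingSeq n * (Real.sqrt (2 * n) * ((n : ℝ) / Real.exp 1) ^ n) := by
    rw [Stirling.stirlingSeq, div_mul_cancel₀ _ hd.ne']
  have hrpow : (n : ℝ) ^ ((n : ℝ) + 1 / 2) = (n : ℝ) ^ n * Real.sqrt n := by
    rw [Real.rpow_add hnpos, Real.rpow_natCast, Real.sqrt_eq_rpow]
  have hkey : Real.sqrt (2 * n) * ((n : ℝ) / Real.exp 1) ^ n =
      Real.sqrt 2 * ((n : ℝ) ^ ((n : ℝ) + 1 / 2) * Real.exp (-(n : ℝ))) := by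
    rw [hrpow, Real.sqrt_mul (by norm_num), div_pow, ← Real.exp_nat_mul,
      Real.exp_neg, mul_one]
    ring
  constructor
  · have h1 : Real.sqrt π * (Real.sqrt (2 * n) * ((n : ℝ) / Real.exp 1) ^ n)
        ≤ (n.factorial : ℝ) := by
      rw [hfact]
      exact mul_le_mul_of_nonneg_right (sqrt_pi_le_stirlingSeq n hn) hd.le
    calc Real.sqrt (2 * π) * (n : ℝ) ^ ((n : ℝ) + 1 / 2) * Real.exp (-(n : ℝ))
        = Real.sqrt π * (Real.sqrt (2 * n) * ((n : ℝ) / Real.exp 1) ^ n) := by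
          rw [hkey, Real.sqrt_mul (by norm_num)]; ring
      _ ≤ _ := h1
  · have h2 : (n.factorial : ℝ) ≤
        (Real.exp 1 / Real.sqrt 2) * (Real.sqrt (2 * n) * ((n : ℝ) / Real.exp 1) ^ n) := by
      rw [hfact]
      exact mul_le_mul_of_nonneg_right (stirlingSeq_le_one n hn) hd.le
    calc (n.factorial : ℝ) ≤ _ := h2
      _ = Real.exp 1 * (n : ℝ) ^ ((n : ℝ) + 1 / 2) * Real.exp (-(n : ℝ)) := by
          rw [hkey]
          have h2 : Real.sqrt 2 ≠ 0 := by positivity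
          field_simp
end

section
/- For integers h ≥ 1 and 0 ≤ r ≤ h−1, one has C(h,r)·C(h−1,r) − C(h,r+1)·C(h−1,r−1) = (1/(r+1))·C(h,r)·C(h−1,r), where C(a,b) denotes the binomial coefficient (with the convention C(h−1,−1)=0 when r=0). -/
/-- Ballot-type identity for counting isomorphism classes of S-graphs:
for `h ≥ 1` and `0 ≤ r ≤ h−1`,
`C(h,r)·C(h−1,r) − C(h,r+1)·C(h−1,r−1) = (1/(r+1))·C(h,r)·C(h−1,r)`,
with the convention `C(h−1,−1) = 0` when `r = 0`. -/
theorem stmt_1 (h r : ℕ) (hh : 1 ≤ h) (hr : r ≤ h - 1) :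
    (h.choose r : ℝ) * ((h - 1).choose r : ℝ)
      - (h.choose (r + 1) : ℝ) * (if r = 0 then 0 else ((h - 1).choose (r - 1) : ℝ))
      = (1 / (r + 1 : ℝ)) * (h.choose r : ℝ) * ((h - 1).choose r : ℝ) := by
  obtain ⟨n, rfl⟩ : ∃ n, h = n + 1 := ⟨h - 1, (Nat.succ_pred_eq_of_pos hh).symm⟩
  simp only [Nat.add_sub_cancel] at *
  rcases Nat.eq_zero_or_pos r with rfl | hrpos
  · simp
  obtain ⟨s, rfl⟩ : ∃ s, r = s + 1 := ⟨r - 1, (Nat.succ_pred_eq_of_pos hrpos).symm⟩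
  have hs : s + 1 ≠ 0 := by omega
  simp only [hs, if_false, Nat.add_sub_cancel]
  have key1 : ((n + 1 : ℕ) * n.choose s : ℝ) = ((n + 1).choose (s + 1) * (s + 1) : ℕ) := by
    exact_mod_cast congrArg (Nat.cast : ℕ → ℝ) (Nat.add_one_mul_choose_eq n s)
  have key2 : ((n + 1 : ℕ) * n.choose (s + 1) : ℝ) =
      ((n + 1).choose (s + 2) * (s + 2) : ℕ) := by
    exact_mod_cast congrArg (Nat.cast : ℕ → ℝ) (Nat.add_one_mul_choose_eq n (s + 1))
  push_cast at key1 key2 ⊢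
  have h2 : (s : ℝ) + 1 + 1 ≠ 0 := by positivity
  field_simp
  nlinarith [key1, key2, sq_nonneg ((n : ℝ))]
end

section
/- Let h ≥ 2 and p ≥ q ≥ 1 be integers. Then the sum S₁ = Σ_{r=1}^{h−2} p^(h−r) · q^(r+1) · (1/(r+1)) · C(h,r) · C(h−1,r) satisfies S₁ ≤ p^(h−1) · q² · (1/h) · C(2h, h+1). -/
open Finset

/-! Termwise, `(q/p)^(r-1) ≤ 1` moves all but two powers of `q` onto `p`, and
`C(h-1,r)/(r+1) = C(h,r+1)/h` turns the weight into a product of two binomials along the antidiagonal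
`r + (h-1-r) = h-1`, whose total is `C(2h,h-1) = C(2h,h+1)` by Vandermonde. -/

theorem Nat.sum_choose_mul_choose_sub_le (m n k : ℕ) {s : Finset ℕ} (hs : s ⊆ range (k + 1)) :
    ∑ r ∈ s, m.choose r * n.choose (k - r) ≤ (m + n).choose k := by
  rw [Nat.add_choose_eq, Finset.Nat.sum_antidiagonal_eq_sum_range_succ_mk]
  exact sum_le_sum_of_subset hs

theorem Nat.sum_Icc_choose_mul_choose_succ_le (h : ℕ) :
    ∑ r ∈ Icc 1 (h - 2), h.choose r * h.choose (r + 1) ≤ (2 * h).choose (h + 1) := by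
  rcases Nat.eq_zero_or_pos h with rfl | hpos
  · simp
  calc ∑ r ∈ Icc 1 (h - 2), h.choose r * h.choose (r + 1)
      = ∑ r ∈ Icc 1 (h - 2), h.choose r * h.choose (h - 1 - r) := by
        refine sum_congr rfl fun r hr => ?_
        rw [mem_Icc] at hr
        rw [← Nat.choose_symm (by omega : r + 1 ≤ h)]
        congr 2
        omega
    _ ≤ (h + h).choose (h - 1) :=
        Nat.sum_choose_mul_choose_sub_le h h (h - 1) fun r hr => by
          rw [mem_Icc] at hr; rw [mem_range]; omega
    _ = (2 * h).choose (h + 1) := by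
        rw [← two_mul]
        exact Nat.choose_symm_of_eq_add (by omega)

theorem pow_sub_mul_pow_succ_le {R : Type*} [CommSemiring R] [PartialOrder R] [IsOrderedRing R]
    {x y : R} (hy : 0 ≤ y) (hyx : y ≤ x) {h r : ℕ} (hr : 1 ≤ r)
    (hrh : r ≤ h) : x ^ (h - r) * y ^ (r + 1) ≤ x ^ (h - 1) * y ^ 2 := by
  have hx : 0 ≤ x := hy.trans hyx
  calc x ^ (h - r) * y ^ (r + 1) = x ^ (h - r) * y ^ (r - 1) * y ^ 2 := by
        rw [mul_assoc, ← pow_add]; congr 2; omega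
    _ ≤ x ^ (h - r) * x ^ (r - 1) * y ^ 2 := by gcongr
    _ = x ^ (h - 1) * y ^ 2 := by
        rw [← pow_add]; congr 2; omega

theorem Nat.choose_pred_div_succ {K : Type*} [Field K] [CharZero K] {h : ℕ} (hh : 0 < h) (r : ℕ) :
    ((h - 1).choose r : K) / (r + 1) = (h.choose (r + 1) : K) / h := by
  have key := Nat.add_one_mul_choose_eq (h - 1) r
  rw [Nat.sub_add_cancel hh] at key
  rw [div_eq_div_iff (Nat.cast_add_one_ne_zero r) (Nat.cast_ne_zero.mpr hh.ne')]
  exact_mod_cast (mul_comm _ _).trans key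

theorem stmt_4_general (p q h : ℕ) (hpq : q ≤ p) :
    ∑ r ∈ Finset.Icc 1 (h - 2),
        (p : ℝ) ^ (h - r) * (q : ℝ) ^ (r + 1) * (1 / (r + 1 : ℝ)) *
          (h.choose r : ℝ) * ((h - 1).choose r : ℝ)
      ≤ (p : ℝ) ^ (h - 1) * (q : ℝ) ^ 2 * (1 / (h : ℝ)) * ((2 * h).choose (h + 1) : ℝ) := by
  have hpq' : (q : ℝ) ≤ p := by exact_mod_cast hpq
  calc _ ≤ ∑ r ∈ Icc 1 (h - 2), (p : ℝ) ^ (h - 1) * (q : ℝ) ^ 2 * (1 / (h : ℝ)) *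
          ((h.choose r * h.choose (r + 1) : ℕ) : ℝ) := by
        refine sum_le_sum fun r hr => ?_
        rw [mem_Icc] at hr
        have hweight := Nat.choose_pred_div_succ (K := ℝ) (by omega : 0 < h) r
        have hpow := pow_sub_mul_pow_succ_le (Nat.cast_nonneg q) hpq' hr.1 (by omega : r ≤ h)
        calc _ = (p : ℝ) ^ (h - r) * (q : ℝ) ^ (r + 1) * (h.choose r : ℝ) *
                (((h - 1).choose r : ℝ) / (r + 1)) := by ring
          _ ≤ (p : ℝ) ^ (h - 1) * (q : ℝ) ^ 2 * (h.choose r : ℝ) *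
                ((h.choose (r + 1) : ℝ) / h) := by rw [hweight]; gcongr
          _ = _ := by push_cast; ring
    _ = (p : ℝ) ^ (h - 1) * (q : ℝ) ^ 2 * (1 / (h : ℝ)) *
          ((∑ r ∈ Icc 1 (h - 2), h.choose r * h.choose (r + 1) : ℕ) : ℝ) := by
        rw [Nat.cast_sum, mul_sum]
    _ ≤ _ := by
        gcongr
        exact_mod_cast Nat.sum_Icc_choose_mul_choose_succ_le h

/-- For integers `h ≥ 2` and `p ≥ q ≥ 1`, the sum
`S₁ = Σ_{r=1}^{h−2} p^(h−r)·q^(r+1)·(1/(r+1))·C(h,r)·C(h−1,r)` satisfies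
`S₁ ≤ p^(h−1)·q²·(1/h)·C(2h,h+1)`. -/
theorem stmt_4 (p q h : ℕ) (hq : 1 ≤ q) (hpq : q ≤ p) (hh : 2 ≤ h) :
    ∑ r ∈ Finset.Icc 1 (h - 2),
        (p : ℝ) ^ (h - r) * (q : ℝ) ^ (r + 1) * (1 / (r + 1 : ℝ)) *
          (h.choose r : ℝ) * ((h - 1).choose r : ℝ)
      ≤ (p : ℝ) ^ (h - 1) * (q : ℝ) ^ 2 * (1 / (h : ℝ)) * ((2 * h).choose (h + 1) : ℝ) :=
  stmt_4_general p q h hpq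
end

section
/- Let h > m ≥ 1 and p ≥ 2h. Then the ratio of the number of S-graphs with m distinct edges to the main term satisfies m^(h−m)·Σ_{r=0}^{m−1}(p)_{m−r}(q)_{r+1}(1/(r+1))C(m,r)C(m−1,r) ≤ (h/(p−h))^(h−m) · Σ_{r=0}^{h−1}(p)_{h−r}(q)_{r+1}(1/(r+1))C(h,r)C(h−1,r), and moreover Σ_{m=1}^{h−1}(h/(p−h))^(h−m) ≤ h/(p−2h). -/
/-!
Both sums are compared term by term. Each of the `h - m` extra factors of `(p)_{h-r}` over
`(p)_{m-r}` is at least `p - h`, while `m^(h-m)` and both binomial coefficients only grow when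
`m` is replaced by `h`; the summands with `m ≤ r < h` are nonnegative. The second claim is the
geometric series `Σ_{k ≥ 1} t^k = t / (1 - t)` with `t = h / (p - h)`, for which
`t / (1 - t) = h / (p - 2h)`.
-/

open Finset

namespace Nat

theorem pow_mul_descFactorial_le_descFactorial_add (p n k : ℕ) :
    (p - (n + k)) ^ k * p.descFactorial n ≤ p.descFactorial (n + k) := by
  calc (p - (n + k)) ^ k * p.descFactorial n
      ≤ (p - n).descFactorial k * p.descFactorial n := by
        gcongr
        exact (Nat.pow_le_pow_left (by omega) k).trans (pow_sub_le_descFactorial (p - n) k)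
    _ = p.descFactorial (n + k) := by
        simpa using descFactorial_mul_descFactorial (n := p) (Nat.le_add_right n k)

theorem sub_pow_mul_pow_mul_descFactorial_mul_choose_le {p m h r : ℕ} (hmh : m ≤ h)
    (hrm : r ≤ m) :
    (p - h) ^ (h - m) * m ^ (h - m) * (p.descFactorial (m - r) * m.choose r * (m - 1).choose r)
      ≤ h ^ (h - m) * (p.descFactorial (h - r) * h.choose r * (h - 1).choose r) := by
  have hdesc : (p - h) ^ (h - m) * p.descFactorial (m - r) ≤ p.descFactorial (h - r) := by
    have := pow_mul_descFactorial_le_descFactorial_add p (m - r) (h - m)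
    rw [show m - r + (h - m) = h - r by omega] at this
    exact (Nat.mul_le_mul_right _ (Nat.pow_le_pow_left (by omega) _)).trans this
  calc (p - h) ^ (h - m) * m ^ (h - m) * (p.descFactorial (m - r) * m.choose r * (m - 1).choose r)
      = ((p - h) ^ (h - m) * p.descFactorial (m - r)) *
          (m ^ (h - m) * (m.choose r * (m - 1).choose r)) := by ring
    _ ≤ p.descFactorial (h - r) * (h ^ (h - m) * (h.choose r * (h - 1).choose r)) := by
        gcongr
    _ = h ^ (h - m) * (p.descFactorial (h - r) * h.choose r * (h - 1).choose r) := by ring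

end Nat

/-- `sGraphSum p q h` is the main term of the S-graph count. -/
noncomputable def sGraphSum (p q n : ℕ) : ℝ :=
  ∑ r ∈ range n, (p.descFactorial (n - r) : ℝ) * q.descFactorial (r + 1) * (1 / (r + 1 : ℝ)) *
    n.choose r * (n - 1).choose r

theorem sub_pow_mul_pow_mul_sGraphSum_le {p q m h : ℕ} (hmh : m ≤ h) (hhp : h ≤ p) :
    ((p : ℝ) - h) ^ (h - m) * (m : ℝ) ^ (h - m) * sGraphSum p q m
      ≤ (h : ℝ) ^ (h - m) * sGraphSum p q h := by
  unfold sGraphSum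
  rw [mul_sum, mul_sum]
  refine (sum_le_sum fun r hr => ?_).trans
    (sum_le_sum_of_subset_of_nonneg (range_subset_range.mpr hmh) fun _ _ _ => by positivity)
  have hreal : ((p : ℝ) - h) ^ (h - m) * (m : ℝ) ^ (h - m) *
        ((p.descFactorial (m - r) : ℝ) * m.choose r * (m - 1).choose r)
      ≤ (h : ℝ) ^ (h - m) * ((p.descFactorial (h - r) : ℝ) * h.choose r * (h - 1).choose r) := by
    rw [← Nat.cast_sub hhp]
    exact_mod_cast Nat.sub_pow_mul_pow_mul_descFactorial_mul_choose_le hmh (mem_range.mp hr).le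
  have hq : (0 : ℝ) ≤ q.descFactorial (r + 1) * (1 / (r + 1 : ℝ)) := by positivity
  convert mul_le_mul_of_nonneg_right hreal hq using 1 <;> ring

theorem sum_Icc_pow_sub_le {t : ℝ} (ht0 : 0 ≤ t) (ht1 : t < 1) (h : ℕ) :
    ∑ m ∈ Icc 1 (h - 1), t ^ (h - m) ≤ t / (1 - t) := by
  have hIcc : Icc 1 (h - 1) = Ico 1 h := by ext; simp only [mem_Icc, mem_Ico]; omega
  rw [hIcc, sum_Ico_reflect (fun k => t ^ k) 1 (Nat.le_succ h), Nat.add_sub_cancel]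
  simpa using geom_sum_Ico_le_of_lt_one (m := 1) (n := h) ht0 ht1

theorem stmt_13_general (p q h m : ℕ) (hmh : m < h)
    (hp : 2 * h < p) :
    ((m : ℝ) ^ (h - m) *
        ∑ r ∈ Finset.range m,
          (p.descFactorial (m - r) : ℝ) * (q.descFactorial (r + 1) : ℝ) * (1 / (r + 1 : ℝ)) *
            (m.choose r : ℝ) * ((m - 1).choose r : ℝ)
      ≤ ((h : ℝ) / ((p : ℝ) - h)) ^ (h - m) *
          ∑ r ∈ Finset.range h,
            (p.descFactorial (h - r) : ℝ) * (q.descFactorial (r + 1) : ℝ) * (1 / (r + 1 : ℝ)) *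
              (h.choose r : ℝ) * ((h - 1).choose r : ℝ)) ∧
    (∑ m' ∈ Finset.Icc 1 (h - 1), ((h : ℝ) / ((p : ℝ) - h)) ^ (h - m')
      ≤ (h : ℝ) / ((p : ℝ) - 2 * h)) := by
  have hp' : (2 * h : ℝ) < p := by exact_mod_cast hp
  have hph : (0 : ℝ) < (p : ℝ) - h := by linarith
  have hp2h : (0 : ℝ) < (p : ℝ) - 2 * h := by linarith
  constructor
  · change (m : ℝ) ^ (h - m) * sGraphSum p q m ≤ _ * sGraphSum p q h
    have := sub_pow_mul_pow_mul_sGraphSum_le (q := q) hmh.le (by omega : h ≤ p)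
    rw [div_pow, div_mul_eq_mul_div, le_div_iff₀ (pow_pos hph _)]
    linarith
  · have ht1 : (h : ℝ) / ((p : ℝ) - h) < 1 := by rw [div_lt_one hph]; linarith
    have hgeom : (h : ℝ) / ((p : ℝ) - h) / (1 - (h : ℝ) / ((p : ℝ) - h))
        = (h : ℝ) / ((p : ℝ) - 2 * h) := by
      field_simp
      ring
    exact hgeom ▸ sum_Icc_pow_sub_le (by positivity) ht1 h

/-- For `h > m ≥ 1` and `p > 2h` (with `p ≥ q ≥ 1`): the contribution of S-graphs with `m`
distinct edges is dominated by `(h/(p−h))^(h−m)` times the main term, and the geometric sum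
`Σ_{m=1}^{h−1} (h/(p−h))^(h−m)` is at most `h/(p−2h)`. -/
theorem stmt_13 (p q h m : ℕ) (hq : 1 ≤ q) (hpq : q ≤ p) (hm : 1 ≤ m) (hmh : m < h)
    (hp : 2 * h < p) :
    ((m : ℝ) ^ (h - m) *
        ∑ r ∈ Finset.range m,
          (p.descFactorial (m - r) : ℝ) * (q.descFactorial (r + 1) : ℝ) * (1 / (r + 1 : ℝ)) *
            (m.choose r : ℝ) * ((m - 1).choose r : ℝ)
      ≤ ((h : ℝ) / ((p : ℝ) - h)) ^ (h - m) *
          ∑ r ∈ Finset.range h,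
            (p.descFactorial (h - r) : ℝ) * (q.descFactorial (r + 1) : ℝ) * (1 / (r + 1 : ℝ)) *
              (h.choose r : ℝ) * ((h - 1).choose r : ℝ)) ∧
    (∑ m' ∈ Finset.Icc 1 (h - 1), ((h : ℝ) / ((p : ℝ) - h)) ^ (h - m')
      ≤ (h : ℝ) / ((p : ℝ) - 2 * h)) :=
  stmt_13_general p q h m hmh hp
end
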